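/- Define g(α, w) := ∇γ(R(α)w) · R(α + π/2)w for α ∈ ℝ and w ∈ ℝ². Then for all α, β ∈ ℝ and all w, v ∈ ℝ², the following lower bound holds for the sum of the orientation cross-term and the divergence cross-term: (g(α, w) − g(β, v))(α − β) + (ᵀR(α)∇γ(R(α)w) − ᵀR(β)∇γ(R(β)v)) · (w − v) ≥ −[ 4√2 L₂ |w|² |α − β|² + 8 L₂ |w − v| |w| |α − β| + 4 L₀ |w| |α − β|² + 6 L₀ |w − v| |α − β| + 2 L₂ |w − v|² ]. (This is the pointwise estimate underlying the uniqueness proof for the time-discrete elliptic system.) -/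

import Mathlib

open Real
open scoped RealInnerProductSpace

/-!
Write `p = ∇γ(R(α)w)` and `q = ∇γ(R(β)v)`. Since `ᵀR(α) = R(-α)`, the left-hand side regroups
exactly as `⟪p - q, R(α)w - R(β)v⟫` plus inner products of `p` and `q` with first-order Taylor
remainders of `θ ↦ R(θ)w`, of size `≤ 2|α - β|²|w|`, and with vectors of size `≤ 2|α - β||w - v|`.
The first term is nonnegative because the gradient of a convex function is monotone, and the others
are controlled by `|∇γ| ≤ L₀`; so the left-hand side is in fact
`≥ -L₀ (4|w||α - β|² + 3|w - v||α - β|)`.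
-/

/-- The rotation of `ℝ²` through angle `θ`, with matrix `((cos θ, −sin θ), (sin θ, cos θ))`.
Its transpose is `rot (−θ)`. -/
noncomputable def rot (θ : ℝ) (w : EuclideanSpace ℝ (Fin 2)) : EuclideanSpace ℝ (Fin 2) :=
  (WithLp.equiv 2 (Fin 2 → ℝ)).symm
    ![Real.cos θ * w 0 - Real.sin θ * w 1, Real.sin θ * w 0 + Real.cos θ * w 1]

lemma rot_apply_zero (θ : ℝ) (w : EuclideanSpace ℝ (Fin 2)) :
    rot θ w 0 = cos θ * w 0 - sin θ * w 1 := rfl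

lemma rot_apply_one (θ : ℝ) (w : EuclideanSpace ℝ (Fin 2)) :
    rot θ w 1 = sin θ * w 0 + cos θ * w 1 := rfl

lemma EuclideanSpace.inner_fin_two (u v : EuclideanSpace ℝ (Fin 2)) :
    ⟪u, v⟫ = u 0 * v 0 + u 1 * v 1 := by
  simp [PiLp.inner_apply, Fin.sum_univ_two, mul_comm]

lemma rot_add (α β : ℝ) (w : EuclideanSpace ℝ (Fin 2)) :
    rot (α + β) w = rot α (rot β w) := by
  ext i; fin_cases i <;>
    simp only [Fin.zero_eta, Fin.mk_one, Fin.isValue, rot_apply_zero, rot_apply_one, cos_add,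
      sin_add] <;> ring

lemma inner_rot_neg_left (θ : ℝ) (x y : EuclideanSpace ℝ (Fin 2)) :
    ⟪rot (-θ) x, y⟫ = ⟪x, rot θ y⟫ := by
  simp only [EuclideanSpace.inner_fin_two, rot_apply_zero, rot_apply_one, cos_neg, sin_neg]
  ring

lemma norm_rot (θ : ℝ) (w : EuclideanSpace ℝ (Fin 2)) : ‖rot θ w‖ = ‖w‖ := by
  have : ⟪rot θ w, rot θ w⟫ = ⟪w, w⟫ := by
    rw [← inner_rot_neg_left, ← rot_add, neg_add_cancel]
    congr 1; ext i; fin_cases i <;> simp [rot_apply_zero, rot_apply_one]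
  simpa [real_inner_self_eq_norm_sq] using this

lemma rot_eq_cos_smul_add_sin_smul (θ : ℝ) (w : EuclideanSpace ℝ (Fin 2)) :
    rot θ w = cos θ • w + sin θ • rot (π / 2) w := by
  ext i; fin_cases i <;>
    simp only [Fin.zero_eta, Fin.mk_one, Fin.isValue, rot_apply_zero, rot_apply_one,
      PiLp.add_apply, PiLp.smul_apply, smul_eq_mul, cos_pi_div_two, sin_pi_div_two] <;> ring

lemma abs_cos_sub_one_le (t : ℝ) : |cos t - 1| ≤ t ^ 2 / 2 := by
  rw [abs_of_nonpos (sub_nonpos.2 (cos_le_one t))]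
  linarith [one_sub_sq_div_two_le_cos (x := t)]

lemma abs_sin_sub_self_le (t : ℝ) : |sin t - t| ≤ t ^ 2 := by
  rw [abs_sub_comm]
  rcases le_or_gt |t| 2 with ht | ht
  · calc |t - sin t| ≤ |t| ^ 3 / 6 := abs_sub_sin_le t
      _ ≤ t ^ 2 := by
        rw [← sq_abs t]; nlinarith [abs_nonneg t, sq_nonneg |t|]
  · calc |t - sin t| ≤ |t| + 1 := (abs_sub _ _).trans (by gcongr; exact abs_sin_le_one t)
      _ ≤ t ^ 2 := by rw [← sq_abs t]; nlinarith

lemma norm_smul_add_smul_rot_pi_div_two_le (a b : ℝ) (u : EuclideanSpace ℝ (Fin 2)) :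
    ‖a • u + b • rot (π / 2) u‖ ≤ (|a| + |b|) * ‖u‖ := by
  calc _ ≤ ‖a • u‖ + ‖b • rot (π / 2) u‖ := norm_add_le _ _
    _ = (|a| + |b|) * ‖u‖ := by rw [norm_smul, norm_smul, norm_rot]; simp only [norm_eq_abs]; ring

lemma norm_rot_sub_rot_le (α β : ℝ) (u : EuclideanSpace ℝ (Fin 2)) :
    ‖rot α u - rot β u‖ ≤ 2 * |α - β| * ‖u‖ := by
  have hsplit : rot α u - rot β u =
      (cos (α - β) - 1) • rot β u + sin (α - β) • rot (π / 2) (rot β u) := by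
    conv_lhs => rw [show α = (α - β) + β by ring, rot_add, rot_eq_cos_smul_add_sin_smul]
    module
  have hcos : |cos (α - β) - 1| ≤ |α - β| := by
    simpa using abs_cos_sub_cos_le (α - β) 0
  calc ‖rot α u - rot β u‖ ≤ (|cos (α - β) - 1| + |sin (α - β)|) * ‖rot β u‖ := by
        rw [hsplit]; exact norm_smul_add_smul_rot_pi_div_two_le _ _ _
    _ ≤ 2 * |α - β| * ‖u‖ := by
        rw [norm_rot]; gcongr; linarith [abs_sin_le_abs (x := α - β)]

lemma norm_rot_sub_rot_sub_smul_rot_le (α β : ℝ) (w : EuclideanSpace ℝ (Fin 2)) :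
    ‖rot β w - rot α w - (β - α) • rot (α + π / 2) w‖ ≤ 2 * (β - α) ^ 2 * ‖w‖ := by
  set t := β - α
  have hsplit : rot β w - rot α w - t • rot (α + π / 2) w =
      (cos t - 1) • rot α w + (sin t - t) • rot (π / 2) (rot α w) := by
    rw [add_comm α, rot_add, show β = t + α by ring, rot_add, rot_eq_cos_smul_add_sin_smul t]
    module
  calc _ ≤ (|cos t - 1| + |sin t - t|) * ‖rot α w‖ := by
        rw [hsplit]; exact norm_smul_add_smul_rot_pi_div_two_le _ _ _
    _ ≤ (t ^ 2 / 2 + t ^ 2) * ‖w‖ := by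
        rw [norm_rot]; gcongr
        exacts [abs_cos_sub_one_le t, abs_sin_sub_self_le t]
    _ ≤ 2 * t ^ 2 * ‖w‖ := by gcongr; linarith [sq_nonneg t]

lemma ConvexOn.inner_gradient_sub_gradient_nonneg {E : Type*} [NormedAddCommGroup E]
    [InnerProductSpace ℝ E] [CompleteSpace E] {f : E → ℝ} {f' : E → E}
    (hconv : ConvexOn ℝ Set.univ f) (hgrad : ∀ x, HasGradientAt f (f' x) x) (x y : E) :
    0 ≤ ⟪f' y - f' x, y - x⟫ := by
  set φ : ℝ → ℝ := fun t => f (AffineMap.lineMap x y t)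
  have hφ' : ∀ t, HasDerivAt φ ⟪f' (AffineMap.lineMap x y t), y - x⟫ t := fun t =>
    (hgrad _).hasFDerivAt.comp_hasDerivAt t AffineMap.hasDerivAt_lineMap
  have hφconv : ConvexOn ℝ Set.univ φ := hconv.comp_affineMap (AffineMap.lineMap x y)
  have hmono := hφconv.monotoneOn_deriv (fun t _ => (hφ' t).differentiableAt)
    (Set.mem_univ 0) (Set.mem_univ 1) zero_le_one
  rw [(hφ' 0).deriv, (hφ' 1).deriv, AffineMap.lineMap_apply_zero,
    AffineMap.lineMap_apply_one] at hmono
  rw [inner_sub_left]; linarith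

lemma cross_terms_eq (p q w v : EuclideanSpace ℝ (Fin 2)) (α β : ℝ) :
    (⟪p, rot (α + π / 2) w⟫ - ⟪q, rot (β + π / 2) v⟫) * (α - β)
        + ⟪rot (-α) p - rot (-β) q, w - v⟫
      = ⟪p - q, rot α w - rot β v⟫
        + ⟪p, (rot β w - rot α w - (β - α) • rot (α + π / 2) w)
            + (rot α (w - v) - rot β (w - v))⟫
        + ⟪q, (rot α w - rot β w - (α - β) • rot (β + π / 2) w)
            + (α - β) • rot (β + π / 2) (w - v)⟫ := by
  simp only [EuclideanSpace.inner_fin_two, PiLp.add_apply, PiLp.sub_apply, PiLp.smul_apply,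
    smul_eq_mul, rot_apply_zero, rot_apply_one, cos_add_pi_div_two, sin_add_pi_div_two,
    cos_neg, sin_neg]
  ring

lemma neg_mul_le_inner_of_norm_le {E : Type*} [NormedAddCommGroup E] [InnerProductSpace ℝ E]
    {p x : E} {L c : ℝ} (hp : ‖p‖ ≤ L) (hx : ‖x‖ ≤ c) : -(L * c) ≤ ⟪p, x⟫ := by
  have := neg_le_of_abs_le (abs_real_inner_le_norm p x)
  nlinarith [norm_nonneg p, norm_nonneg x]

lemma cross_terms_ge (p q w v : EuclideanSpace ℝ (Fin 2)) (α β : ℝ) {L : ℝ} (hp : ‖p‖ ≤ L)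
    (hq : ‖q‖ ≤ L) :
    ⟪p - q, rot α w - rot β v⟫ - L * (4 * ‖w‖ * |α - β| ^ 2 + 3 * ‖w - v‖ * |α - β|)
      ≤ (⟪p, rot (α + π / 2) w⟫ - ⟪q, rot (β + π / 2) v⟫) * (α - β)
        + ⟪rot (-α) p - rot (-β) q, w - v⟫ := by
  have hp_err := neg_mul_le_inner_of_norm_le hp <| (norm_add_le _ _).trans <| add_le_add
    (norm_rot_sub_rot_sub_smul_rot_le α β w) (norm_rot_sub_rot_le α β (w - v))
  have hq_err := neg_mul_le_inner_of_norm_le hq <| (norm_add_le _ _).trans <| add_le_add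
    (norm_rot_sub_rot_sub_smul_rot_le β α w) (norm_smul (α - β) (rot (β + π / 2) (w - v))).le
  rw [norm_rot, Real.norm_eq_abs] at hq_err
  rw [show (β - α) ^ 2 = |α - β| ^ 2 by rw [sq_abs]; ring] at hp_err
  rw [← sq_abs] at hq_err
  rw [cross_terms_eq]
  linarith

theorem stmt4_general (γ : EuclideanSpace ℝ (Fin 2) → ℝ)
    (γ' : EuclideanSpace ℝ (Fin 2) → EuclideanSpace ℝ (Fin 2)) (L₀ L₂ : ℝ)
    (hconv : ConvexOn ℝ Set.univ γ)
    (hgrad : ∀ x, HasGradientAt γ (γ' x) x)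
    (hbdd : ∀ x, ‖γ' x‖ ≤ L₀)
    (hlip : ∀ x y, ‖γ' x - γ' y‖ ≤ L₂ * ‖x - y‖)
    (g : ℝ → EuclideanSpace ℝ (Fin 2) → ℝ)
    (hg : ∀ α w, g α w = ⟪γ' (rot α w), rot (α + π / 2) w⟫) :
    ∀ (α β : ℝ) (w v : EuclideanSpace ℝ (Fin 2)),
      (g α w - g β v) * (α - β)
          + ⟪rot (-α) (γ' (rot α w)) - rot (-β) (γ' (rot β v)), w - v⟫
        ≥ -(4 * Real.sqrt 2 * L₂ * ‖w‖ ^ 2 * |α - β| ^ 2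
            + 8 * L₂ * ‖w - v‖ * ‖w‖ * |α - β|
            + 4 * L₀ * ‖w‖ * |α - β| ^ 2
            + 6 * L₀ * ‖w - v‖ * |α - β|
            + 2 * L₂ * ‖w - v‖ ^ 2) := by
  intro α β w v
  have hmono := hconv.inner_gradient_sub_gradient_nonneg hgrad (rot β v) (rot α w)
  have hcross := cross_terms_ge (γ' (rot α w)) (γ' (rot β v)) w v α β (hbdd _) (hbdd _)
  have hL₀ : 0 ≤ L₀ := (norm_nonneg _).trans (hbdd 0)
  have hL₂ : 0 ≤ L₂ := by
    simpa using (norm_nonneg _).trans (hlip (EuclideanSpace.single 0 1) 0)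
  rw [hg, hg, ge_iff_le]
  have hslack : 0 ≤ 4 * Real.sqrt 2 * L₂ * ‖w‖ ^ 2 * |α - β| ^ 2 + 8 * L₂ * ‖w - v‖ * ‖w‖ * |α - β|
      + 2 * L₂ * ‖w - v‖ ^ 2 + 3 * L₀ * ‖w - v‖ * |α - β| := by positivity
  linarith

/-- With `g(α, w) := ∇γ(R(α)w) ⬝ R(α + π/2)w`, for all `α, β ∈ ℝ` and `w, v ∈ ℝ²`:
`(g(α,w) − g(β,v))(α − β) + (ᵀR(α)∇γ(R(α)w) − ᵀR(β)∇γ(R(β)v)) ⬝ (w − v)`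
`≥ −[4√2 L₂ |w|²|α−β|² + 8 L₂ |w−v||w||α−β| + 4 L₀ |w||α−β|² + 6 L₀ |w−v||α−β| + 2 L₂ |w−v|²]`. -/
theorem stmt4 (γ : EuclideanSpace ℝ (Fin 2) → ℝ)
    (γ' : EuclideanSpace ℝ (Fin 2) → EuclideanSpace ℝ (Fin 2)) (L₀ L₂ : ℝ)
    (hnonneg : ∀ x, 0 ≤ γ x)
    (hconv : ConvexOn ℝ Set.univ γ)
    (hgrad : ∀ x, HasGradientAt γ (γ' x) x)
    (hbdd : ∀ x, ‖γ' x‖ ≤ L₀)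
    (hlip : ∀ x y, ‖γ' x - γ' y‖ ≤ L₂ * ‖x - y‖)
    (hmin : ∀ x, x ≠ 0 → γ 0 < γ x)
    (g : ℝ → EuclideanSpace ℝ (Fin 2) → ℝ)
    (hg : ∀ α w, g α w = ⟪γ' (rot α w), rot (α + π / 2) w⟫) :
    ∀ (α β : ℝ) (w v : EuclideanSpace ℝ (Fin 2)),
      (g α w - g β v) * (α - β)
          + ⟪rot (-α) (γ' (rot α w)) - rot (-β) (γ' (rot β v)), w - v⟫
        ≥ -(4 * Real.sqrt 2 * L₂ * ‖w‖ ^ 2 * |α - β| ^ 2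
            + 8 * L₂ * ‖w - v‖ * ‖w‖ * |α - β|
            + 4 * L₀ * ‖w‖ * |α - β| ^ 2
            + 6 * L₀ * ‖w - v‖ * |α - β|
            + 2 * L₂ * ‖w - v‖ ^ 2) :=
  stmt4_general γ γ' L₀ L₂ hconv hgrad hbdd hlip g hg
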